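/- arXiv:2401.00957 — 7 statements merged into one kernel-verified Lean document; each statement's English description precedes it below -/
import Mathlib

section
/- Let t ∈ ℝ and (a,b) ∈ ℍ_t. Then |a|² ≠ t·|b|² if and only if (a,b) has a two-sided inverse with respect to ·_t; in that case the inverse is (conj(a)/(|a|² − t|b|²), −b/(|a|² − t|b|²)), i.e. (a,b) ·_t (conj(a)/(|a|² − t|b|²), −b/(|a|² − t|b|²)) = (1,0) = (conj(a)/(|a|² − t|b|²), −b/(|a|² − t|b|²)) ·_t (a,b), and moreover π_t of this inverse equals the inverse of the matrix [(a,b)]_t in M₂(ℂ). -/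
/-!
`π_t` is an injective multiplicative map `ℍ_t → M₂(ℂ)` sending `(1,0)` to `1`, with
`det [h]_t = |a|² − t|b|²` and `adj [h]_t = [h†]_t`. Hence `[h]_t⁻¹ = det⁻¹ • [h†]_t` is the
realization of `h† / (|a|² − t|b|²)`, and `·_t`-invertibility of `h` is invertibility of `[h]_t`,
i.e. `det [h]_t ≠ 0`.
-/

noncomputable section

open ComplexConjugate

/-- The `t`-scaled vector multiplication on `ℂ × ℂ` (the ring `ℍ_t`). -/
def hmul (t : ℝ) (h₁ h₂ : ℂ × ℂ) : ℂ × ℂ :=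
  (h₁.1 * h₂.1 + (t : ℂ) * h₁.2 * conj h₂.2, h₁.1 * h₂.2 + h₁.2 * conj h₂.1)

/-- The realization `π_t : ℍ_t → M₂(ℂ)`. -/
def pit (t : ℝ) (h : ℂ × ℂ) : Matrix (Fin 2) (Fin 2) ℂ :=
  !![h.1, (t : ℂ) * h.2; conj h.2, conj h.1]

/-- The hypercomplex conjugate `(a,b)† = (conj a, -b)`. -/
def hdag (h : ℂ × ℂ) : ℂ × ℂ := (conj h.1, -h.2)

/-- The linear functional `τ((a,b)) = Re a`, composed with `·_t`-multiplication:
the bilinear form `⟨h₁,h₂⟩_t = τ(h₁ ·_t h₂†)`. -/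
def hform (t : ℝ) (h₁ h₂ : ℂ × ℂ) : ℝ := (hmul t h₁ (hdag h₂)).1.re

def hnormSq (t : ℝ) (h : ℂ × ℂ) : ℝ := Complex.normSq h.1 - t * Complex.normSq h.2

def hinv (t : ℝ) (h : ℂ × ℂ) : ℂ × ℂ :=
  (conj h.1 / (hnormSq t h : ℂ), -h.2 / (hnormSq t h : ℂ))

theorem pit_injective (t : ℝ) : Function.Injective (pit t) := by
  intro h k hhk
  have h₁ : h.1 = k.1 := congrFun (congrFun hhk 0) 0
  have h₂ : conj h.2 = conj k.2 := congrFun (congrFun hhk 1) 0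
  exact Prod.ext h₁ ((starRingEnd ℂ).injective h₂)

theorem pit_one (t : ℝ) : pit t (1, 0) = 1 := by
  simp [pit, Matrix.one_fin_two]

theorem pit_hmul (t : ℝ) (h k : ℂ × ℂ) : pit t (hmul t h k) = pit t h * pit t k := by
  rw [pit, pit, pit, Matrix.mul_fin_two]
  ext i j
  fin_cases i <;> fin_cases j <;> simp [hmul] <;> ring

theorem det_pit (t : ℝ) (h : ℂ × ℂ) : (pit t h).det = hnormSq t h := by
  simp only [pit, hnormSq, Matrix.det_fin_two_of, Complex.ofReal_sub, Complex.ofReal_mul,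
    Complex.normSq_eq_conj_mul_self]
  ring

theorem adjugate_pit (t : ℝ) (h : ℂ × ℂ) : (pit t h).adjugate = pit t (hdag h) := by
  simp [pit, hdag, Matrix.adjugate_fin_two_of]

-- `Ring.inverse 0 = 0` and `x / 0 = 0` make this true also when `hnormSq t h = 0`.
theorem pit_hinv (t : ℝ) (h : ℂ × ℂ) : pit t (hinv t h) = (pit t h)⁻¹ := by
  rw [Matrix.inv_def, adjugate_pit, det_pit, Ring.inverse_eq_inv']
  ext i j
  fin_cases i <;> fin_cases j <;> simp [pit, hdag, hinv, div_eq_inv_mul, mul_left_comm]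

theorem isUnit_det_pit (t : ℝ) {h : ℂ × ℂ} (hd : hnormSq t h ≠ 0) : IsUnit (pit t h).det := by
  rw [det_pit]
  exact (Complex.ofReal_ne_zero.mpr hd).isUnit

theorem hmul_hinv (t : ℝ) {h : ℂ × ℂ} (hd : hnormSq t h ≠ 0) : hmul t h (hinv t h) = (1, 0) :=
  pit_injective t <| by
    rw [pit_hmul, pit_hinv, pit_one, Matrix.mul_nonsing_inv _ (isUnit_det_pit t hd)]

theorem hinv_hmul (t : ℝ) {h : ℂ × ℂ} (hd : hnormSq t h ≠ 0) : hmul t (hinv t h) h = (1, 0) :=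
  pit_injective t <| by
    rw [pit_hmul, pit_hinv, pit_one, Matrix.nonsing_inv_mul _ (isUnit_det_pit t hd)]

theorem hnormSq_ne_zero_of_hmul_eq_one (t : ℝ) {h k : ℂ × ℂ} (hk : hmul t k h = (1, 0)) :
    hnormSq t h ≠ 0 := by
  have hu := Matrix.isUnit_det_of_left_inverse (by rw [← pit_hmul, hk, pit_one])
  rw [det_pit] at hu
  exact_mod_cast hu.ne_zero

/-- `(a,b)` is `·_t`-invertible iff `|a|² ≠ t|b|²`, with the explicit
two-sided inverse, whose realization is the matrix inverse of `[(a,b)]_t`. -/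
theorem hypercomplex_invertible_iff (t : ℝ) (a b : ℂ) :
    (Complex.normSq a ≠ t * Complex.normSq b ↔
      ∃ k : ℂ × ℂ, hmul t (a, b) k = (1, 0) ∧ hmul t k (a, b) = (1, 0)) ∧
    (Complex.normSq a ≠ t * Complex.normSq b →
      hmul t (a, b)
        (conj a / ((Complex.normSq a - t * Complex.normSq b : ℝ) : ℂ),
          -b / ((Complex.normSq a - t * Complex.normSq b : ℝ) : ℂ)) = (1, 0) ∧
      hmul t
        (conj a / ((Complex.normSq a - t * Complex.normSq b : ℝ) : ℂ),
          -b / ((Complex.normSq a - t * Complex.normSq b : ℝ) : ℂ)) (a, b) = (1, 0) ∧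
      pit t
        (conj a / ((Complex.normSq a - t * Complex.normSq b : ℝ) : ℂ),
          -b / ((Complex.normSq a - t * Complex.normSq b : ℝ) : ℂ)) = (pit t (a, b))⁻¹) := by
  have hinv_spec : Complex.normSq a ≠ t * Complex.normSq b →
      hmul t (a, b) (hinv t (a, b)) = (1, 0) ∧ hmul t (hinv t (a, b)) (a, b) = (1, 0) ∧
        pit t (hinv t (a, b)) = (pit t (a, b))⁻¹ := fun hd =>
    have hn : hnormSq t (a, b) ≠ 0 := sub_ne_zero.mpr hd
    ⟨hmul_hinv t hn, hinv_hmul t hn, pit_hinv t (a, b)⟩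
  refine ⟨⟨fun hd => ⟨hinv t (a, b), (hinv_spec hd).1, (hinv_spec hd).2.1⟩, ?_⟩, hinv_spec⟩
  rintro ⟨k, -, hk⟩
  exact sub_ne_zero.mp (hnormSq_ne_zero_of_hmul_eq_one t hk)
end
end

section
/- Let t ∈ ℝ and (a,b) ∈ ℍ_t with a = x + y·i (x, y ∈ ℝ). Then the set of eigenvalues of the matrix [(a,b)]_t (the set of z ∈ ℂ with det([(a,b)]_t − z·I₂) = 0) is: {x} if y² = t·|b|²; {x + √(t·|b|² − y²), x − √(t·|b|² − y²)} (a subset of ℝ) if y² < t·|b|²; and {x + i·√(y² − t·|b|²), x − i·√(y² − t·|b|²)} (a subset of ℂ \ ℝ when y² > t|b|²) if y² > t·|b|². -/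
noncomputable section

open ComplexConjugate

/-
The characteristic polynomial of `[(a,b)]_t` is `(z - Re a)² + (Im a)² - t|b|²`, a real
quadratic in `z - Re a`. Its roots are `Re a ± w` for any square root `w` of `t|b|² - (Im a)²`,
which is the real number `√(t|b|² - y²)` or the purely imaginary `i√(y² - t|b|²)` according
to the sign of `y² - t|b|²`.
-/

theorem sub_sq_add_eq_zero_iff {R : Type*} [CommRing R] [NoZeroDivisors R] {z c d w : R}
    (hw : w ^ 2 = -d) : (z - c) ^ 2 + d = 0 ↔ z = c + w ∨ z = c - w := by
  rw [← sub_neg_eq_add, ← hw, sub_eq_zero, sq_eq_sq_iff_eq_or_eq_neg, sub_eq_iff_eq_add',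
    sub_eq_iff_eq_add', ← sub_eq_add_neg]

theorem setOf_sub_sq_add_eq_zero {R : Type*} [CommRing R] [NoZeroDivisors R] {c d w : R}
    (hw : w ^ 2 = -d) : {z : R | (z - c) ^ 2 + d = 0} = {c + w, c - w} :=
  Set.ext fun _ => sub_sq_add_eq_zero_iff hw

theorem pit_sub_smul_one (t : ℝ) (a b z : ℂ) :
    pit t (a, b) - z • (1 : Matrix (Fin 2) (Fin 2) ℂ) =
      !![a - z, (t : ℂ) * b; conj b, conj a - z] := by
  rw [pit, Matrix.one_fin_two, Matrix.smul_of, Matrix.of_sub_of]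
  simp

theorem det_pit_sub_smul_one (t : ℝ) (a b z : ℂ) :
    (pit t (a, b) - z • (1 : Matrix (Fin 2) (Fin 2) ℂ)).det =
      (z - a.re) ^ 2 + ((a.im ^ 2 - t * Complex.normSq b : ℝ) : ℂ) := by
  rw [pit_sub_smul_one, Matrix.det_fin_two_of]
  conv_lhs => rw [← Complex.re_add_im a]
  simp only [map_add, map_mul, Complex.conj_ofReal, Complex.conj_I]
  push_cast
  linear_combination (-(a.im : ℂ) ^ 2) * Complex.I_sq - (t : ℂ) * Complex.mul_conj b

/-- the eigenvalues of `[(a,b)]_t`, for `a = x + y i`, according to the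
sign of `y² − t|b|²`. -/
theorem spectrum_of_realization (t x y : ℝ) (b : ℂ) (a : ℂ) (ha : a = (x : ℂ) + (y : ℂ) * Complex.I) :
    (y ^ 2 = t * Complex.normSq b →
      {z : ℂ | Matrix.det (pit t (a, b) - z • (1 : Matrix (Fin 2) (Fin 2) ℂ)) = 0} =
        {((x : ℝ) : ℂ)}) ∧
    (y ^ 2 < t * Complex.normSq b →
      {z : ℂ | Matrix.det (pit t (a, b) - z • (1 : Matrix (Fin 2) (Fin 2) ℂ)) = 0} =
        {((x + Real.sqrt (t * Complex.normSq b - y ^ 2) : ℝ) : ℂ),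
         ((x - Real.sqrt (t * Complex.normSq b - y ^ 2) : ℝ) : ℂ)} ∧
      ∀ z ∈ {z : ℂ | Matrix.det (pit t (a, b) - z • (1 : Matrix (Fin 2) (Fin 2) ℂ)) = 0},
        z.im = 0) ∧
    (y ^ 2 > t * Complex.normSq b →
      {z : ℂ | Matrix.det (pit t (a, b) - z • (1 : Matrix (Fin 2) (Fin 2) ℂ)) = 0} =
        {(x : ℂ) + Complex.I * ((Real.sqrt (y ^ 2 - t * Complex.normSq b) : ℝ) : ℂ),
         (x : ℂ) - Complex.I * ((Real.sqrt (y ^ 2 - t * Complex.normSq b) : ℝ) : ℂ)} ∧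
      ∀ z ∈ {z : ℂ | Matrix.det (pit t (a, b) - z • (1 : Matrix (Fin 2) (Fin 2) ℂ)) = 0},
        z.im ≠ 0) := by
  set d := y ^ 2 - t * Complex.normSq b with hd
  have hspec : {z : ℂ | Matrix.det (pit t (a, b) - z • (1 : Matrix (Fin 2) (Fin 2) ℂ)) = 0} =
      {z : ℂ | (z - x) ^ 2 + (d : ℂ) = 0} := by
    simp [det_pit_sub_smul_one, ha, hd]
  rw [hspec]
  refine ⟨fun h => ?_, fun h => ?_, fun h => ?_⟩
  · rw [setOf_sub_sq_add_eq_zero (w := 0) (by simp [hd, h])]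
    simp
  · have hw : ((√(-d) : ℝ) : ℂ) ^ 2 = -(d : ℂ) := by
      rw [← Complex.ofReal_pow, Real.sq_sqrt (by linarith), Complex.ofReal_neg]
    rw [setOf_sub_sq_add_eq_zero hw, neg_sub]
    refine ⟨by push_cast; rfl, ?_⟩
    rintro z (rfl | rfl) <;> simp
  · have hd0 : 0 < d := by linarith
    have hw : (Complex.I * (√d : ℝ)) ^ 2 = -(d : ℂ) := by
      rw [mul_pow, Complex.I_sq, ← Complex.ofReal_pow, Real.sq_sqrt hd0.le, neg_one_mul]
    rw [setOf_sub_sq_add_eq_zero hw]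
    refine ⟨rfl, ?_⟩
    rintro z (rfl | rfl) <;> simp [(Real.sqrt_pos.mpr hd0).ne']
end
end

section
/- Let t < 0 be a real scale and let ξ, η ∈ ℍ_t. If σ_t(ξ) = σ_t(η) in ℂ (ξ and η are t-spectral related), then ξ and η are similar in ℍ_t: there exists an invertible q ∈ ℍ_t with η = q⁻¹ ·_t ξ ·_t q. -/
noncomputable section

open ComplexConjugate

/-- The `t`-spectralization `σ_t : ℍ_t → ℂ`. -/
def sigmaT (t : ℝ) (h : ℂ × ℂ) : ℂ :=
  if h.2 = 0 then h.1
  else (h.1.re : ℂ) + Complex.I * ((Real.sqrt (h.1.im ^ 2 - t * Complex.normSq h.2) : ℝ) : ℂ)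

/-!
For `t ≤ 0`, `σ_t(a, b)` has real part `Re a` and squared modulus `|a|² - t|b|²`, so
`t`-spectral related elements share trace `2 Re a` and reduced norm `N`. Both are then roots of the
real quadratic `X² - 2 Re(a) X + N`, and since `ξ + ξ† = 2 Re a` is central this gives
`ξ (η - ξ†) = (η - ξ†) η`. If `η - ξ† = 0`, a pure element `(0, c)` with `ξ.2 conj c` imaginary
conjugates `ξ` to `ξ†` instead. For `t < 0` the reduced norm is positive definite, so the
intertwiner is invertible, with inverse `q† / N(q)`.
-/

open Complex

/-- The reduced norm of `ℍ_t`, i.e. `det (pit t h)`. -/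
def hnorm (t : ℝ) (h : ℂ × ℂ) : ℝ := normSq h.1 - t * normSq h.2

lemma hmul_assoc (t : ℝ) (a b c : ℂ × ℂ) :
    hmul t (hmul t a b) c = hmul t a (hmul t b c) := by
  simp only [hmul, Prod.mk.injEq, map_add, map_mul, conj_conj, conj_ofReal]
  constructor <;> ring

lemma one_hmul (t : ℝ) (a : ℂ × ℂ) : hmul t (1, 0) a = a := by
  simp [hmul]

lemma sigmaT_re (t : ℝ) (h : ℂ × ℂ) : (sigmaT t h).re = h.1.re := by
  unfold sigmaT
  split_ifs <;> simp

lemma sigmaT_normSq {t : ℝ} (ht : t ≤ 0) (h : ℂ × ℂ) : normSq (sigmaT t h) = hnorm t h := by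
  unfold sigmaT hnorm
  split_ifs with hb
  · simp [hb]
  · have hr : 0 ≤ h.1.im ^ 2 - t * normSq h.2 := by
      nlinarith [normSq_nonneg h.2, sq_nonneg h.1.im]
    rw [mul_comm I, normSq_add_mul_I, Real.sq_sqrt hr]
    simp only [normSq_apply]
    ring

lemma hnorm_pos {t : ℝ} (ht : t < 0) {q : ℂ × ℂ} (hq : q ≠ 0) : 0 < hnorm t q := by
  obtain ⟨a, b⟩ := q
  simp only [hnorm]
  rcases not_and_or.mp (by simpa [Prod.ext_iff] using hq : ¬(a = 0 ∧ b = 0)) with ha | hb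
  · nlinarith [normSq_pos.2 ha, normSq_nonneg b]
  · nlinarith [normSq_nonneg a, normSq_pos.2 hb]

lemma exists_hmul_inverse {t : ℝ} (ht : t < 0) {q : ℂ × ℂ} (hq : q ≠ 0) :
    ∃ qinv, hmul t q qinv = (1, 0) ∧ hmul t qinv q = (1, 0) := by
  have hn : (hnorm t q : ℂ) ≠ 0 := by exact_mod_cast (hnorm_pos ht hq).ne'
  refine ⟨(conj q.1 / hnorm t q, -q.2 / hnorm t q), ?_, ?_⟩ <;>
  · simp only [hmul, Prod.mk.injEq, map_div₀, map_neg, conj_conj, conj_ofReal]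
    refine ⟨?_, by field_simp; ring⟩
    field_simp
    push_cast [hnorm]
    linear_combination mul_conj q.1 - (t : ℂ) * mul_conj q.2

lemma hmul_sub_hdag_eq_sub_hdag_hmul {t : ℝ} {ξ η : ℂ × ℂ} (hre : ξ.1.re = η.1.re)
    (hnorm_eq : hnorm t ξ = hnorm t η) :
    hmul t ξ (η - hdag ξ) = hmul t (η - hdag ξ) η := by
  have htrace : ξ.1 + conj ξ.1 = η.1 + conj η.1 := by rw [add_conj, add_conj, hre]
  have hdet : ξ.1 * conj ξ.1 - t * (ξ.2 * conj ξ.2) = η.1 * conj η.1 - t * (η.2 * conj η.2) := by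
    simp only [mul_conj]
    exact_mod_cast hnorm_eq
  simp only [hmul, hdag, Prod.fst_sub, Prod.snd_sub, Prod.mk.injEq, map_sub, map_neg, conj_conj]
  constructor
  · linear_combination η.1 * htrace - hdet
  · linear_combination η.2 * htrace

lemma exists_ne_zero_hmul_eq_hmul_hdag_self (t : ℝ) (ξ : ℂ × ℂ) :
    ∃ q : ℂ × ℂ, q ≠ 0 ∧ hmul t ξ q = hmul t q (hdag ξ) := by
  by_cases hb : ξ.2 = 0
  · refine ⟨(0, 1), by simp [Prod.ext_iff], ?_⟩
    simp [hmul, hdag, hb]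
  · refine ⟨(0, I * ξ.2), by simp [Prod.ext_iff, hb], ?_⟩
    simp only [hmul, hdag, Prod.mk.injEq, map_mul, map_neg, conj_conj, conj_I, map_zero]
    constructor <;> ring

lemma exists_ne_zero_hmul_eq_hmul {t : ℝ} {ξ η : ℂ × ℂ} (hre : ξ.1.re = η.1.re)
    (hnorm_eq : hnorm t ξ = hnorm t η) :
    ∃ q : ℂ × ℂ, q ≠ 0 ∧ hmul t ξ q = hmul t q η := by
  by_cases hdeg : η = hdag ξ
  · exact hdeg ▸ exists_ne_zero_hmul_eq_hmul_hdag_self t ξ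
  · exact ⟨η - hdag ξ, sub_ne_zero.mpr hdeg, hmul_sub_hdag_eq_sub_hdag_hmul hre hnorm_eq⟩

/-- for `t < 0`, `t`-spectral related elements of `ℍ_t` are similar. -/
theorem spectral_related_implies_similar (t : ℝ) (ht : t < 0) (ξ η : ℂ × ℂ)
    (hrel : sigmaT t ξ = sigmaT t η) :
    ∃ q qinv : ℂ × ℂ,
      hmul t q qinv = (1, 0) ∧ hmul t qinv q = (1, 0) ∧
      hmul t (hmul t qinv ξ) q = η := by
  have hre : ξ.1.re = η.1.re := by rw [← sigmaT_re t ξ, hrel, sigmaT_re]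
  have hnorm_eq : hnorm t ξ = hnorm t η := by
    rw [← sigmaT_normSq ht.le, hrel, sigmaT_normSq ht.le]
  obtain ⟨q, hq0, hq⟩ := exists_ne_zero_hmul_eq_hmul hre hnorm_eq
  obtain ⟨qinv, hright, hleft⟩ := exists_hmul_inverse ht hq0
  refine ⟨q, qinv, hright, hleft, ?_⟩
  rw [hmul_assoc, hq, ← hmul_assoc, hleft, one_hmul]
end
end

section
/- If t < 0 is a real scale, then the bilinear form ⟨·,·⟩_t is a (positive-definite) real inner product on ℍ_t: it is ℝ-bilinear, symmetric, satisfies ⟨h, h⟩_t ≥ 0 for all h ∈ ℍ_t, and ⟨h, h⟩_t = 0 if and only if h = (0,0). -/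
noncomputable section

open ComplexConjugate

/-! `⟨(a₁,b₁),(a₂,b₂)⟩_t = Re(a₁ conj a₂) - t Re(b₁ conj b₂)` is the Euclidean inner product of
`ℂ = ℝ²` on the first coordinate minus `t` times it on the second, so bilinearity and symmetry are
inherited from `ℂ`, and for `t < 0` the form `‖a‖² + |t| ‖b‖²` on the diagonal is positive definite. -/

open scoped RealInnerProductSpace

section HForm

variable (t : ℝ)

theorem hform_eq_inner (h₁ h₂ : ℂ × ℂ) :
    hform t h₁ h₂ = ⟪h₁.1, h₂.1⟫ - t * ⟪h₁.2, h₂.2⟫ := by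
  simp only [hform, hmul, hdag, Complex.inner, map_neg, Complex.add_re, Complex.mul_re,
    Complex.mul_im, Complex.conj_re, Complex.conj_im, Complex.ofReal_re, Complex.ofReal_im,
    Complex.neg_re, Complex.neg_im]
  ring

theorem hform_add_left (h₁ h₂ h₃ : ℂ × ℂ) :
    hform t (h₁ + h₂) h₃ = hform t h₁ h₃ + hform t h₂ h₃ := by
  simp only [hform_eq_inner, Prod.fst_add, Prod.snd_add, inner_add_left]
  ring

theorem hform_comm (h₁ h₂ : ℂ × ℂ) : hform t h₁ h₂ = hform t h₂ h₁ := by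
  simp only [hform_eq_inner, real_inner_comm]

theorem hform_add_right (h₁ h₂ h₃ : ℂ × ℂ) :
    hform t h₁ (h₂ + h₃) = hform t h₁ h₂ + hform t h₁ h₃ := by
  simp only [hform_comm t h₁, hform_add_left]

theorem hform_smul_left (r : ℝ) (h₁ h₂ : ℂ × ℂ) :
    hform t (r • h₁) h₂ = r * hform t h₁ h₂ := by
  simp only [hform_eq_inner, Prod.smul_fst, Prod.smul_snd, real_inner_smul_left]
  ring

theorem hform_smul_right (r : ℝ) (h₁ h₂ : ℂ × ℂ) :
    hform t h₁ (r • h₂) = r * hform t h₁ h₂ := by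
  simp only [hform_comm t h₁, hform_smul_left]

theorem hform_self (h : ℂ × ℂ) : hform t h h = ‖h.1‖ ^ 2 + (-t) * ‖h.2‖ ^ 2 := by
  rw [hform_eq_inner, real_inner_self_eq_norm_sq, real_inner_self_eq_norm_sq]
  ring

variable {t}

theorem hform_self_nonneg (ht : t ≤ 0) (h : ℂ × ℂ) : 0 ≤ hform t h h := by
  rw [hform_self]
  have : 0 ≤ -t := neg_nonneg.mpr ht
  positivity

theorem hform_self_eq_zero_iff (ht : t < 0) (h : ℂ × ℂ) : hform t h h = 0 ↔ h = (0, 0) := by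
  have hnt : 0 < -t := neg_pos.mpr ht
  rw [hform_self, add_eq_zero_iff_of_nonneg (by positivity) (by positivity),
    mul_eq_zero_iff_left hnt.ne', sq_eq_zero_iff, sq_eq_zero_iff, norm_eq_zero, norm_eq_zero,
    Prod.ext_iff]

end HForm

/-- for `t < 0`, `⟨·,·⟩_t` is a positive-definite real inner product
on `ℍ_t`: bilinear, symmetric, nonnegative, and definite. -/
theorem form_is_inner_product_of_neg (t : ℝ) (ht : t < 0) :
    (∀ h₁ h₂ h₃ : ℂ × ℂ, hform t (h₁ + h₂) h₃ = hform t h₁ h₃ + hform t h₂ h₃) ∧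
    (∀ h₁ h₂ h₃ : ℂ × ℂ, hform t h₁ (h₂ + h₃) = hform t h₁ h₂ + hform t h₁ h₃) ∧
    (∀ (r : ℝ) (h₁ h₂ : ℂ × ℂ), hform t (r • h₁) h₂ = r * hform t h₁ h₂) ∧
    (∀ (r : ℝ) (h₁ h₂ : ℂ × ℂ), hform t h₁ (r • h₂) = r * hform t h₁ h₂) ∧
    (∀ h₁ h₂ : ℂ × ℂ, hform t h₁ h₂ = hform t h₂ h₁) ∧
    (∀ h : ℂ × ℂ, 0 ≤ hform t h h) ∧
    (∀ h : ℂ × ℂ, hform t h h = 0 ↔ h = ((0 : ℂ), (0 : ℂ))) :=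
  ⟨hform_add_left t, hform_add_right t, hform_smul_left t, hform_smul_right t, hform_comm t,
    hform_self_nonneg ht.le, hform_self_eq_zero_iff ht⟩
end
end

section
/- For every real scale t, an element h = (a,b) ∈ ℍ_t satisfies h^† ·_t h = (1,0) (the multiplication operator M_h is an isometry) if and only if h^† ·_t h = (1,0) = h ·_t h^† (M_h is a unitary), if and only if |a|² − t·|b|² = 1, i.e. det([h]_t) = 1. -/
noncomputable section

open ComplexConjugate

theorem hmul_hdag_self (t : ℝ) (h : ℂ × ℂ) :
    hmul t (hdag h) h = ((hnormSq t h : ℂ), 0) := by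
  obtain ⟨a, b⟩ := h
  simp only [hmul, hdag, hnormSq, Complex.ofReal_sub, Complex.ofReal_mul,
    Complex.normSq_eq_conj_mul_self, Prod.mk.injEq]
  constructor <;> ring

theorem hmul_self_hdag (t : ℝ) (h : ℂ × ℂ) :
    hmul t h (hdag h) = ((hnormSq t h : ℂ), 0) := by
  obtain ⟨a, b⟩ := h
  simp only [hmul, hdag, hnormSq, Complex.ofReal_sub, Complex.ofReal_mul,
    Complex.normSq_eq_conj_mul_self, Complex.conj_conj, map_neg, Prod.mk.injEq]
  constructor <;> ring

/-- `M_h` is an isometry iff it is unitary iff `|a|² − t|b|² = 1`,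
i.e. `det([h]_t) = 1`. -/
theorem isometry_iff_unitary_iff_det_one (t : ℝ) (a b : ℂ) :
    (hmul t (hdag (a, b)) (a, b) = (1, 0) ↔
      hmul t (hdag (a, b)) (a, b) = (1, 0) ∧ hmul t (a, b) (hdag (a, b)) = (1, 0)) ∧
    (hmul t (hdag (a, b)) (a, b) = (1, 0) ↔
      Complex.normSq a - t * Complex.normSq b = 1) ∧
    (hmul t (hdag (a, b)) (a, b) = (1, 0) ↔
      Matrix.det (pit t (a, b)) = 1) := by
  rw [hmul_hdag_self, hmul_self_hdag, det_pit, Prod.mk.injEq, eq_self_iff_true,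
    and_true, Complex.ofReal_eq_one]
  exact ⟨and_self_iff.symm, Iff.rfl, Iff.rfl⟩
end
end

section
/- Let t > 0 and θ ∈ ℝ, and let J_t ∈ M₂(ℝ) be the matrix with rows (0, t) and (1, 0) (the realization of the hyperbolic imaginary unit j_t, which satisfies J_t² = t·I₂). Then the matrix exponential satisfies exp(θ·J_t) = cosh(√t·θ)·I₂ + (sinh(√t·θ)/√t)·J_t, i.e. exp(θ·J_t) is the matrix with rows (cosh(√t·θ), √t·sinh(√t·θ)) and (sinh(√t·θ)/√t, cosh(√t·θ)); equivalently e^{j_tθ} = (cosh(√t·θ), sinh(√t·θ)/√t) in 𝔻_t. Moreover det(exp(θ·J_t)) = cosh²(√t·θ) − sinh²(√t·θ) = 1, so ‖e^{j_tθ}‖_t = 1, i.e. e^{j_tθ} lies in the unit subset 𝕋_t. -/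
/-!
Since `J_t² = t`, the even powers of `θ J_t` are the scalars `(√t θ)^{2n}` and the odd ones are
`(√t θ)^{2n+1} / √t · J_t`, so the exponential series of `θ J_t` splits into the series of
`cosh (√t θ)` and of `sinh (√t θ) / √t · J_t`. The determinant and the semi-norm then reduce to
`cosh² - sinh² = 1`.
-/

noncomputable section

open ComplexConjugate

open NormedSpace
open scoped Nat

section SqEqScalar

variable {A : Type*} [Ring A] [Algebra ℝ A] [TopologicalSpace A] [IsTopologicalRing A]

theorem expSeries_even_of_sq_eq_smul_one {J : A} {s : ℝ} (hJ : J ^ 2 = s ^ 2 • (1 : A))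
    (θ : ℝ) (n : ℕ) :
    expSeries ℝ A (2 * n) (fun _ => θ • J) = ((s * θ) ^ (2 * n) / (2 * n)!) • (1 : A) := by
  rw [expSeries_apply_eq, smul_pow, pow_mul J, hJ, smul_pow, one_pow, smul_smul, smul_smul]
  congr 1
  ring

theorem expSeries_odd_of_sq_eq_smul_one {J : A} {s : ℝ} (hs : s ≠ 0)
    (hJ : J ^ 2 = s ^ 2 • (1 : A)) (θ : ℝ) (n : ℕ) :
    expSeries ℝ A (2 * n + 1) (fun _ => θ • J) =
      ((s * θ) ^ (2 * n + 1) / (2 * n + 1)! / s) • J := by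
  rw [expSeries_apply_eq, smul_pow, pow_succ J, pow_mul J, hJ, smul_pow, one_pow, smul_one_mul,
    smul_smul, smul_smul]
  congr 1
  field_simp
  ring

theorem exp_smul_of_sq_eq_smul_one [ContinuousSMul ℝ A] [T2Space A] {J : A} {s : ℝ} (hs : s ≠ 0)
    (hJ : J ^ 2 = s ^ 2 • (1 : A)) (θ : ℝ) :
    exp (θ • J) = Real.cosh (s * θ) • (1 : A) + (Real.sinh (s * θ) / s) • J := by
  rw [exp_eq_tsum ℝ]
  refine HasSum.tsum_eq ?_
  simp_rw [← expSeries_apply_eq]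
  refine HasSum.even_add_odd ?_ ?_
  · simp_rw [expSeries_even_of_sq_eq_smul_one hJ]
    exact (Real.hasSum_cosh _).smul_const 1
  · simp_rw [expSeries_odd_of_sq_eq_smul_one hs hJ]
    exact ((Real.hasSum_sinh _).div_const s).smul_const J

end SqEqScalar

/-- for `t > 0`, with `J_t = !![0, t; 1, 0]` (so `J_t² = t·I₂`), the
matrix exponential satisfies
`exp(θ J_t) = cosh(√t θ)·I₂ + (sinh(√t θ)/√t)·J_t`, explicitly the matrix with rows
`(cosh(√t θ), √t sinh(√t θ))` and `(sinh(√t θ)/√t, cosh(√t θ))`; its determinant is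
`cosh² − sinh² = 1`, so `e^{j_tθ} = (cosh(√t θ), sinh(√t θ)/√t)` lies in `𝕋_t`. -/
theorem exp_jt_of_pos (t θ : ℝ) (ht : 0 < t) (Jt : Matrix (Fin 2) (Fin 2) ℝ)
    (hJ : Jt = !![0, t; 1, 0]) :
    Jt ^ 2 = t • (1 : Matrix (Fin 2) (Fin 2) ℝ) ∧
    NormedSpace.exp (θ • Jt) =
      Real.cosh (Real.sqrt t * θ) • (1 : Matrix (Fin 2) (Fin 2) ℝ) +
        (Real.sinh (Real.sqrt t * θ) / Real.sqrt t) • Jt ∧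
    NormedSpace.exp (θ • Jt) =
      !![Real.cosh (Real.sqrt t * θ), Real.sqrt t * Real.sinh (Real.sqrt t * θ);
         Real.sinh (Real.sqrt t * θ) / Real.sqrt t, Real.cosh (Real.sqrt t * θ)] ∧
    Matrix.det (NormedSpace.exp (θ • Jt)) = 1 ∧
    Real.cosh (Real.sqrt t * θ) ^ 2 - Real.sinh (Real.sqrt t * θ) ^ 2 = 1 ∧
    Real.sqrt |Real.cosh (Real.sqrt t * θ) ^ 2 -
        t * (Real.sinh (Real.sqrt t * θ) / Real.sqrt t) ^ 2| = 1 := by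
  subst hJ
  set s := Real.sqrt t
  have hs : s ≠ 0 := (Real.sqrt_pos.mpr ht).ne'
  have hs2 : s ^ 2 = t := Real.sq_sqrt ht.le
  have hcs : Real.cosh (s * θ) ^ 2 - Real.sinh (s * θ) ^ 2 = 1 := Real.cosh_sq_sub_sinh_sq _
  have hsq : !![0, t; 1, 0] ^ 2 = t • (1 : Matrix (Fin 2) (Fin 2) ℝ) := by
    rw [sq, Matrix.mul_fin_two, Matrix.smul_one_eq_diagonal, Matrix.diagonal_fin_two]
    simp
  have hexp : NormedSpace.exp (θ • !![0, t; 1, 0]) =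
      Real.cosh (s * θ) • (1 : Matrix (Fin 2) (Fin 2) ℝ) +
        (Real.sinh (s * θ) / s) • !![0, t; 1, 0] :=
    exp_smul_of_sq_eq_smul_one hs (by rwa [hs2]) θ
  have hmatrix : NormedSpace.exp (θ • !![0, t; 1, 0]) =
      !![Real.cosh (s * θ), s * Real.sinh (s * θ); Real.sinh (s * θ) / s, Real.cosh (s * θ)] := by
    rw [hexp, ← hs2]
    ext i j
    fin_cases i <;> fin_cases j <;> simp [field]
  refine ⟨hsq, hexp, hmatrix, ?_, hcs, ?_⟩
  · rw [hmatrix, Matrix.det_fin_two_of, ← hcs]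
    field_simp
  · rw [← hs2, div_pow, mul_div_cancel₀ _ (pow_ne_zero 2 hs), hcs, abs_one, Real.sqrt_one]
end
end

section
/- Let t < 0 and θ ∈ ℝ, and let J_t ∈ M₂(ℝ) be the matrix with rows (0, t) and (1, 0) (the realization of the hyperbolic imaginary unit j_t, which satisfies J_t² = t·I₂). Then the matrix exponential satisfies exp(θ·J_t) = cos(√|t|·θ)·I₂ + (sin(√|t|·θ)/√|t|)·J_t, i.e. exp(θ·J_t) is the matrix with rows (cos(√|t|·θ), −√|t|·sin(√|t|·θ)) and (sin(√|t|·θ)/√|t|, cos(√|t|·θ)); equivalently e^{j_tθ} = (cos(√|t|·θ), sin(√|t|·θ)/√|t|) in 𝔻_t. Moreover det(exp(θ·J_t)) = cos²(√|t|·θ) + sin²(√|t|·θ) = 1, so ‖e^{j_tθ}‖_t = 1, i.e. e^{j_tθ} lies in the unit subset 𝕋_t. -/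
/-!
Since `J_t² = t` with `t < 0`, the element `u = J_t / √|t|` squares to `-1`, so `I ↦ u` extends to
an `ℝ`-algebra map `ℂ → M₂(ℝ)`. Being linear on a finite-dimensional space it is continuous, hence
commutes with `exp`, and `exp(θ J_t) = exp((√|t| θ) u)` is the image of `exp(i √|t| θ) =
cos(√|t| θ) + i sin(√|t| θ)`. The determinant of `c + d J_t` is the form `c² - t d²`, which at
`c = cos x`, `d = sin x / √|t|` becomes `cos² x + sin² x = 1`.
-/

noncomputable section

open ComplexConjugate

open NormedSpace Real

theorem sqrt_abs_sq_of_neg {t : ℝ} (ht : t < 0) : √|t| ^ 2 = -t := by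
  rw [sq_sqrt (abs_nonneg t), abs_of_neg ht]

section NormedAlgebra

variable {A : Type*} [NormedRing A] [NormedAlgebra ℝ A]

theorem exp_smul_of_mul_self_eq_neg_one {u : A} (hu : u * u = -1) (x : ℝ) :
    exp (x • u) = cos x • 1 + sin x • u := by
  let φ := Complex.liftAux u hu
  have hφ : Continuous φ := φ.toLinearMap.continuous_of_finiteDimensional
  have hxu : φ (x * Complex.I) = x • u := by
    rw [← Complex.real_smul, map_smul, Complex.liftAux_apply_I]
  calc exp (x • u) = φ (exp (x * Complex.I)) := by
        rw [← hxu, map_exp_of_mem_ball φ hφ _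
          ((expSeries_radius_eq_top ℝ ℂ).symm ▸ edist_lt_top _ _)]
    _ = cos x • 1 + sin x • u := by
        rw [← Complex.exp_eq_exp_ℂ, Complex.exp_mul_I]
        simp [φ, Complex.liftAux_apply, Algebra.algebraMap_eq_smul_one, Complex.cos_ofReal_re,
          Complex.sin_ofReal_re]

theorem exp_smul_of_sq_eq_smul_one_of_neg {J : A} {t : ℝ} (ht : t < 0) (hJ : J ^ 2 = t • 1)
    (θ : ℝ) : exp (θ • J) = cos (√|t| * θ) • 1 + (sin (√|t| * θ) / √|t|) • J := by
  set s := √|t|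
  have hs : s ≠ 0 := (sqrt_pos.2 (abs_pos.2 ht.ne)).ne'
  have hu : (s⁻¹ • J) * (s⁻¹ • J) = -1 := by
    have : s⁻¹ * s⁻¹ * t = -1 := by field_simp; linarith [sqrt_abs_sq_of_neg ht]
    rw [smul_mul_smul_comm, ← sq J, hJ, smul_smul, this, neg_one_smul]
  have hθJ : θ • J = (s * θ) • (s⁻¹ • J) := by rw [smul_smul]; field_simp
  rw [hθJ, exp_smul_of_mul_self_eq_neg_one hu, smul_smul, div_eq_mul_inv]

end NormedAlgebra

/-- The realization `J_t` of the hyperbolic unit `j_t`. -/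
def jMatrix {R : Type*} [Zero R] [One R] (t : R) : Matrix (Fin 2) (Fin 2) R := !![0, t; 1, 0]

section jMatrix

variable {R : Type*} [CommRing R]

theorem jMatrix_sq (t : R) : jMatrix t ^ 2 = t • 1 := by
  ext i j
  fin_cases i <;> fin_cases j <;> simp [jMatrix, sq]

theorem smul_one_add_smul_jMatrix (t c d : R) : c • 1 + d • jMatrix t = !![c, d * t; d, c] := by
  ext i j
  fin_cases i <;> fin_cases j <;> simp [jMatrix]

theorem det_smul_one_add_smul_jMatrix (t c d : R) :
    (c • 1 + d • jMatrix t).det = c ^ 2 - t * d ^ 2 := by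
  rw [smul_one_add_smul_jMatrix, Matrix.det_fin_two_of]
  ring

end jMatrix

theorem exp_smul_jMatrix {t : ℝ} (ht : t < 0) (θ : ℝ) :
    exp (θ • jMatrix t) = cos (√|t| * θ) • 1 + (sin (√|t| * θ) / √|t|) • jMatrix t := by
  -- any matrix norm will do: `exp` only sees the topology, which all of them induce
  let := Matrix.linftyOpNormedRing (n := Fin 2) (α := ℝ)
  let := Matrix.linftyOpNormedAlgebra (n := Fin 2) (R := ℝ) (α := ℝ)
  exact exp_smul_of_sq_eq_smul_one_of_neg ht (jMatrix_sq t) θ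

theorem cos_sq_sub_mul_sq_sin_div_sqrt_abs {t : ℝ} (ht : t < 0) (x : ℝ) :
    cos x ^ 2 - t * (sin x / √|t|) ^ 2 = 1 := by
  rw [div_pow, sqrt_abs_sq_of_neg ht]
  field_simp [ht.ne]
  linear_combination cos_sq_add_sin_sq x

/-- for `t < 0`, with `J_t = !![0, t; 1, 0]` (so `J_t² = t·I₂`), the
matrix exponential satisfies
`exp(θ J_t) = cos(√|t| θ)·I₂ + (sin(√|t| θ)/√|t|)·J_t`, explicitly the matrix with
rows `(cos(√|t| θ), −√|t| sin(√|t| θ))` and `(sin(√|t| θ)/√|t|, cos(√|t| θ))`; its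
determinant is `cos² + sin² = 1`, so `e^{j_tθ} = (cos(√|t| θ), sin(√|t| θ)/√|t|)`
lies in `𝕋_t`. -/
theorem exp_jt_of_neg (t θ : ℝ) (ht : t < 0) (Jt : Matrix (Fin 2) (Fin 2) ℝ)
    (hJ : Jt = !![0, t; 1, 0]) :
    Jt ^ 2 = t • (1 : Matrix (Fin 2) (Fin 2) ℝ) ∧
    NormedSpace.exp (θ • Jt) =
      Real.cos (Real.sqrt |t| * θ) • (1 : Matrix (Fin 2) (Fin 2) ℝ) +
        (Real.sin (Real.sqrt |t| * θ) / Real.sqrt |t|) • Jt ∧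
    NormedSpace.exp (θ • Jt) =
      !![Real.cos (Real.sqrt |t| * θ), -(Real.sqrt |t| * Real.sin (Real.sqrt |t| * θ));
         Real.sin (Real.sqrt |t| * θ) / Real.sqrt |t|, Real.cos (Real.sqrt |t| * θ)] ∧
    Matrix.det (NormedSpace.exp (θ • Jt)) = 1 ∧
    Real.cos (Real.sqrt |t| * θ) ^ 2 + Real.sin (Real.sqrt |t| * θ) ^ 2 = 1 ∧
    Real.sqrt |Real.cos (Real.sqrt |t| * θ) ^ 2 -
        t * (Real.sin (Real.sqrt |t| * θ) / Real.sqrt |t|) ^ 2| = 1 := by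
  obtain rfl : Jt = jMatrix t := hJ
  have hexp := exp_smul_jMatrix ht θ
  refine ⟨jMatrix_sq t, hexp, ?_, ?_, cos_sq_add_sin_sq _, ?_⟩
  · rw [hexp, smul_one_add_smul_jMatrix]
    have hs : √|t| ≠ 0 := (sqrt_pos.2 (abs_pos.2 ht.ne)).ne'
    congr
    field_simp
    linear_combination sin (√|t| * θ) * sqrt_abs_sq_of_neg ht
  · rw [hexp, det_smul_one_add_smul_jMatrix, cos_sq_sub_mul_sq_sin_div_sqrt_abs ht]
  · rw [cos_sq_sub_mul_sq_sin_div_sqrt_abs ht, abs_one, sqrt_one]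
end
end
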